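/- Assume (AU) with bound N, let ((l, s), v) be a soliton of u at level v (case C1), and set k = v. Then: (a) there exists Φ¹ : ℤ → ℝ satisfying the γ-fundamental relations at l, any two such functions differ by an additive constant, and every such Φ¹ solves the γ-eigenproblem and satisfies (AΦ); (b) there exists Φ² : ℤ → ℝ satisfying the δ-fundamental relations at (l, s), any two such differ by an additive constant, and every such Φ² solves the δ-eigenproblem and satisfies (AΦ). Moreover in this case the relations evaluate to: Φ¹ i − Φ¹ (i+1) = u i − k for all i ≤ l; Φ¹ (i+1) − Φ¹ i = u (i+1) for all i ≥ l; Φ² i − Φ² (i+1) = u (i−1) − k for all i ≤ l+s−1; Φ² (i+1) − Φ² i = u i for all i ≥ l+s. -/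

import Mathlib

/-- `γ i = min (u i) (1 - u (i-1))`. -/
noncomputable def gam (u : ℤ → ℝ) (i : ℤ) : ℝ := min (u i) (1 - u (i - 1))

/-- `δ i = min (u (i-1)) (1 - u i)`. -/
noncomputable def del (u : ℤ → ℝ) (i : ℤ) : ℝ := min (u (i - 1)) (1 - u i)

/-- `Φ` solves the γ-eigenproblem. -/
def SolvesG (u : ℤ → ℝ) (k : ℝ) (Φ : ℤ → ℝ) : Prop :=
  ∀ i : ℤ, max (Φ (i + 1) + gam u i - k) (Φ (i - 1) + gam u i) = Φ i

/-- `Φ` solves the δ-eigenproblem. -/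
def SolvesD (u : ℤ → ℝ) (k : ℝ) (Φ : ℤ → ℝ) : Prop :=
  ∀ i : ℤ, max (Φ (i + 1) + del u i - k) (Φ (i - 1) + del u i) = Φ i

/-- Condition (AΦ). -/
def APhi (k : ℝ) (Φ : ℤ → ℝ) : Prop :=
  ∀ M : ℤ, (∃ N' : ℤ, M ≤ N' ∧ Φ (N' + 1) = Φ N') ∧
    (∃ N'' : ℤ, M ≤ N'' ∧ Φ (-N'' - 1) = Φ (-N'') - k)


/-- A soliton of `u` at level `v` (case C1). -/
def SolitonC1 (u : ℤ → ℝ) (l : ℤ) (s : ℕ) (v : ℝ) : Prop :=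
  1 ≤ s ∧ (∀ i : ℤ, u i + u (i + 1) ≤ v) ∧ v ≤ 1 ∧
  (∀ i : ℤ, l ≤ i → i ≤ l + (s : ℤ) - 1 → u i + u (i + 1) = v) ∧
  u (l - 1) + u l < v ∧ u (l + (s : ℤ)) + u (l + (s : ℤ) + 1) < v

/-- A soliton of `u` (case C2). -/
def SolitonC2 (u : ℤ → ℝ) (l : ℤ) (s : ℕ) : Prop :=
  1 ≤ s ∧ (∀ i : ℤ, l ≤ i → i ≤ l + (s : ℤ) - 1 → 1 ≤ u i + u (i + 1)) ∧
  u (l - 1) + u l < 1 ∧ u (l + (s : ℤ)) + u (l + (s : ℤ) + 1) < 1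

/-- `Φ` satisfies the γ-fundamental relations at `l`. -/
def FundG (u : ℤ → ℝ) (k : ℝ) (l : ℤ) (Φ : ℤ → ℝ) : Prop :=
  (∀ i : ℤ, i ≤ l → Φ i - Φ (i + 1) = gam u i - k) ∧
  (∀ i : ℤ, l ≤ i → Φ (i + 1) - Φ i = gam u (i + 1))

/-- `Φ` satisfies the δ-fundamental relations at `(l, s)`. -/
def FundD (u : ℤ → ℝ) (k : ℝ) (l : ℤ) (s : ℕ) (Φ : ℤ → ℝ) : Prop :=
  (∀ i : ℤ, i ≤ l + (s : ℤ) - 1 → Φ i - Φ (i + 1) = del u i - k) ∧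
  (∀ i : ℤ, l + (s : ℤ) ≤ i → Φ (i + 1) - Φ i = del u (i + 1))

/-
At level `k = v` the soliton bound `u i + u (i+1) ≤ v ≤ 1` collapses the minima: `γ = u` and
`δ i = u (i-1)`. Both families of fundamental relations then prescribe every increment
`Φ (i+1) - Φ i` (the left and right relations agree at the junction because the soliton
equality holds there), whence existence and uniqueness up to a constant. In the eigen-equation at
`i`, the term given by the relation valid at `i` equals `Φ i`, while the other one is at most
`Φ i` because `u i + u (i+1) ≤ k`. Finally (AΦ) holds since `u` vanishes outside `(-N, N)`.
-/

open Filter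

section Primitive

variable {G : Type*} [AddCommGroup G]

theorem Int.exists_forall_add_one_sub_eq (g : ℤ → G) :
    ∃ Φ : ℤ → G, ∀ i, Φ (i + 1) - Φ i = g i := by
  refine ⟨fun i => ∑ j ∈ Finset.Ico 0 i, g j - ∑ j ∈ Finset.Ico i 0, g j, fun i => ?_⟩
  dsimp only
  rcases le_or_gt 0 i with hi | hi
  · rw [Finset.Ico_eq_empty_of_le hi, Finset.Ico_eq_empty_of_le (by omega : (0 : ℤ) ≤ i + 1),
      Finset.Ico_add_one_right_eq_Icc, ← Finset.Ico_insert_right hi,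
      Finset.sum_insert Finset.right_notMem_Ico]
    abel
  · rw [Finset.Ico_eq_empty_of_le hi.le, Finset.Ico_eq_empty_of_le (by omega : i + 1 ≤ 0),
      ← Finset.Ioo_insert_left hi, Finset.sum_insert Finset.left_notMem_Ioo,
      Finset.Ico_add_one_left_eq_Ioo]
    abel

theorem Int.exists_forall_eq_add_const_of_add_one_sub_eq {Φ Ψ : ℤ → G}
    (h : ∀ i, Φ (i + 1) - Φ i = Ψ (i + 1) - Ψ i) : ∃ c, ∀ i, Φ i = Ψ i + c := by
  have hper : Function.Periodic (fun i => Φ i - Ψ i) 1 := fun i => by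
    show Φ (i + 1) - Ψ (i + 1) = Φ i - Ψ i
    rw [sub_eq_sub_iff_sub_eq_sub.1 (h i)]
  refine ⟨Φ 0 - Ψ 0, fun i => ?_⟩
  have hi := hper.int_mul_eq i
  rw [Int.cast_id, mul_one] at hi
  rw [← hi, add_sub_cancel]

end Primitive

/-- The shape shared by the fundamental relations, with junction `m`: `FundD u k l s` is
`IsFundamental (del u) k (l + s)`, and `FundG u k l` adds the left relation at `i = m = l`. -/
def IsFundamental (p : ℤ → ℝ) (k : ℝ) (m : ℤ) (Φ : ℤ → ℝ) : Prop :=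
  (∀ i < m, Φ i - Φ (i + 1) = p i - k) ∧ (∀ i, m ≤ i → Φ (i + 1) - Φ i = p (i + 1))

/-- `SolvesG u k` and `SolvesD u k` are `SolvesEigen (gam u) k` and `SolvesEigen (del u) k`. -/
def SolvesEigen (p : ℤ → ℝ) (k : ℝ) (Φ : ℤ → ℝ) : Prop :=
  ∀ i, max (Φ (i + 1) + p i - k) (Φ (i - 1) + p i) = Φ i

section Fundamental

variable {p : ℤ → ℝ} {k : ℝ} {m : ℤ} {Φ Ψ : ℤ → ℝ}

theorem isFundamental_iff :
    IsFundamental p k m Φ ↔ ∀ i, Φ (i + 1) - Φ i = if m ≤ i then p (i + 1) else k - p i := by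
  refine ⟨fun hΦ i => ?_, fun h => ⟨fun i hi => ?_, fun i hi => by rw [h i, if_pos hi]⟩⟩
  · split_ifs with hi
    · exact hΦ.2 i hi
    · linarith [hΦ.1 i (not_le.1 hi)]
  · have hi' := h i
    rw [if_neg (not_le.2 hi)] at hi'
    linarith

theorem exists_isFundamental (p : ℤ → ℝ) (k : ℝ) (m : ℤ) : ∃ Φ, IsFundamental p k m Φ :=
  (Int.exists_forall_add_one_sub_eq _).imp fun _ h => isFundamental_iff.2 h

theorem IsFundamental.exists_eq_add_const (hΦ : IsFundamental p k m Φ)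
    (hΨ : IsFundamental p k m Ψ) : ∃ c, ∀ i, Φ i = Ψ i + c :=
  Int.exists_forall_eq_add_const_of_add_one_sub_eq fun i => by
    rw [isFundamental_iff.1 hΦ i, isFundamental_iff.1 hΨ i]

theorem IsFundamental.sub_add_one_of_le (hm : p m + p (m + 1) = k)
    (hΦ : IsFundamental p k m Φ) {i : ℤ} (hi : i ≤ m) : Φ i - Φ (i + 1) = p i - k := by
  rcases hi.lt_or_eq with hi | rfl
  · exact hΦ.1 i hi
  · linarith [hΦ.2 i le_rfl]

theorem IsFundamental.solvesEigen (hp : ∀ i, p i + p (i + 1) ≤ k) (hm : p m + p (m + 1) = k)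
    (hΦ : IsFundamental p k m Φ) : SolvesEigen p k Φ := by
  intro i
  have hp' := hp (i - 1)
  rw [sub_add_cancel] at hp'
  rcases le_or_gt i m with hi | hi
  · have hleft := hΦ.1 (i - 1) (by omega)
    rw [sub_add_cancel] at hleft
    have hcur := hΦ.sub_add_one_of_le hm hi
    rw [max_eq_left (by linarith)]
    linarith
  · have hright := hΦ.2 (i - 1) (by omega)
    rw [sub_add_cancel] at hright
    rw [max_eq_right (by linarith [hp i, hΦ.2 i hi.le])]
    linarith

theorem IsFundamental.aPhi (h0 : ∀ᶠ i in cofinite, p i = 0) (hΦ : IsFundamental p k m Φ) :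
    APhi k Φ := by
  rw [Int.cofinite_eq, eventually_sup, eventually_atBot, eventually_atTop] at h0
  obtain ⟨⟨a, ha⟩, b, hb⟩ := h0
  intro M
  refine ⟨⟨max M (max m b), le_max_left _ _, ?_⟩, ⟨max M (max (-m) (-a)), le_max_left _ _, ?_⟩⟩
  · linarith [hΦ.2 (max M (max m b)) (by omega), hb (max M (max m b) + 1) (by omega)]
  · have hleft := hΦ.1 (-max M (max (-m) (-a)) - 1) (by omega)
    rw [sub_add_cancel, ha _ (by omega)] at hleft
    linarith

end Fundamental

theorem fundG_iff {u : ℤ → ℝ} {k : ℝ} {l : ℤ} {Φ : ℤ → ℝ} (h : gam u l + gam u (l + 1) = k) :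
    FundG u k l Φ ↔ IsFundamental (gam u) k l Φ :=
  ⟨fun hΦ => ⟨fun i hi => hΦ.1 i hi.le, hΦ.2⟩,
    fun hΦ => ⟨fun _ hi => hΦ.sub_add_one_of_le h hi, hΦ.2⟩⟩

theorem fundD_iff {u : ℤ → ℝ} {k : ℝ} {l : ℤ} {s : ℕ} {Φ : ℤ → ℝ} :
    FundD u k l s Φ ↔ IsFundamental (del u) k (l + s) Φ := by
  simp only [FundD, IsFundamental, Int.le_sub_one_iff]

theorem eventually_cofinite_eq_zero_of_forall_le_or_le {u : ℤ → ℝ} {N : ℕ}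
    (hAU : ∀ i : ℤ, ((N : ℤ) ≤ i ∨ i ≤ -(N : ℤ)) → u i = 0) : ∀ᶠ i in cofinite, u i = 0 := by
  rw [Int.cofinite_eq, eventually_sup, eventually_atBot, eventually_atTop]
  exact ⟨⟨-N, fun i hi => hAU i (.inr hi)⟩, N, fun i hi => hAU i (.inl hi)⟩

namespace SolitonC1

variable {u : ℤ → ℝ} {l : ℤ} {s : ℕ} {v : ℝ}

theorem pred_add_le_one (h : SolitonC1 u l s v) (i : ℤ) : u (i - 1) + u i ≤ 1 := by
  have hi := h.2.1 (i - 1)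
  rw [sub_add_cancel] at hi
  linarith [h.2.2.1]

theorem gam_eq (h : SolitonC1 u l s v) : gam u = u :=
  funext fun i => min_eq_left (by linarith [h.pred_add_le_one i])

theorem del_eq (h : SolitonC1 u l s v) : del u = fun i => u (i - 1) :=
  funext fun i => min_eq_left (by linarith [h.pred_add_le_one i])

theorem head_add_eq (h : SolitonC1 u l s v) : u l + u (l + 1) = v :=
  h.2.2.2.1 l le_rfl (by have := h.1; omega)

theorem last_add_eq (h : SolitonC1 u l s v) : u (l + s - 1) + u (l + s) = v := by
  have hlast := h.2.2.2.1 (l + s - 1) (by have := h.1; omega) le_rfl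
  rwa [sub_add_cancel] at hlast

end SolitonC1

theorem stmt_10_general (u : ℤ → ℝ) (N : ℕ)
    (hAU : ∀ i : ℤ, ((N : ℤ) ≤ i ∨ i ≤ -(N : ℤ)) → u i = 0)
    (l : ℤ) (s : ℕ) (v : ℝ) (hsol : SolitonC1 u l s v) (k : ℝ) (hk : k = v) :
    ((∃ Φ : ℤ → ℝ, FundG u k l Φ) ∧
     (∀ Φ Ψ : ℤ → ℝ, FundG u k l Φ → FundG u k l Ψ → ∃ c : ℝ, ∀ i : ℤ, Φ i = Ψ i + c) ∧
     (∀ Φ : ℤ → ℝ, FundG u k l Φ → SolvesG u k Φ ∧ APhi k Φ)) ∧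
    ((∃ Φ : ℤ → ℝ, FundD u k l s Φ) ∧
     (∀ Φ Ψ : ℤ → ℝ, FundD u k l s Φ → FundD u k l s Ψ → ∃ c : ℝ, ∀ i : ℤ, Φ i = Ψ i + c) ∧
     (∀ Φ : ℤ → ℝ, FundD u k l s Φ → SolvesD u k Φ ∧ APhi k Φ)) ∧
    (∀ Φ : ℤ → ℝ, FundG u k l Φ →
      (∀ i : ℤ, i ≤ l → Φ i - Φ (i + 1) = u i - k) ∧
      (∀ i : ℤ, l ≤ i → Φ (i + 1) - Φ i = u (i + 1))) ∧
    (∀ Φ : ℤ → ℝ, FundD u k l s Φ →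
      (∀ i : ℤ, i ≤ l + (s : ℤ) - 1 → Φ i - Φ (i + 1) = u (i - 1) - k) ∧
      (∀ i : ℤ, l + (s : ℤ) ≤ i → Φ (i + 1) - Φ i = u i)) := by
  subst hk
  have hg := hsol.gam_eq
  have hd := hsol.del_eq
  refine ⟨?_, ?_, fun Φ hΦ => by simpa only [FundG, hg] using hΦ,
    fun Φ hΦ => by simpa only [FundD, hd, add_sub_cancel_right] using hΦ⟩
  · have hγ : ∀ i, gam u i + gam u (i + 1) ≤ k := by simpa only [hg] using hsol.2.1
    have hγl : gam u l + gam u (l + 1) = k := by simpa only [hg] using hsol.head_add_eq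
    have hγ0 : ∀ᶠ i in cofinite, gam u i = 0 := by
      simpa only [hg] using eventually_cofinite_eq_zero_of_forall_le_or_le hAU
    simp only [fundG_iff hγl]
    exact ⟨exists_isFundamental _ _ _, fun _ _ => IsFundamental.exists_eq_add_const,
      fun _ hΦ => ⟨hΦ.solvesEigen hγ hγl, hΦ.aPhi hγ0⟩⟩
  · have hδ : ∀ i, del u i + del u (i + 1) ≤ k := fun i => by
      simpa only [hd, add_sub_cancel_right, sub_add_cancel] using hsol.2.1 (i - 1)
    have hδm : del u (l + s) + del u (l + s + 1) = k := by
      simpa only [hd, add_sub_cancel_right] using hsol.last_add_eq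
    have hδ0 : ∀ᶠ i in cofinite, del u i = 0 := by
      rw [hd]
      exact (sub_left_injective.tendsto_cofinite).eventually (eventually_cofinite_eq_zero_of_forall_le_or_le hAU)
    simp only [fundD_iff]
    exact ⟨exists_isFundamental _ _ _, fun _ _ => IsFundamental.exists_eq_add_const,
      fun _ hΦ => ⟨hΦ.solvesEigen hδ hδm, hΦ.aPhi hδ0⟩⟩

/-- Case C1. For a soliton `((l, s), v)` of `u` with `k = v`: the γ- and
δ-fundamental eigenvectors exist, are unique up to an additive constant, solve the respective
eigenproblems and satisfy (AΦ); moreover the fundamental relations evaluate explicitly in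
terms of `u`. -/
theorem stmt_10 (u : ℤ → ℝ) (hu : ∀ i : ℤ, 0 ≤ u i ∧ u i ≤ 1)
    (N : ℕ) (hN : 0 < N) (hAU : ∀ i : ℤ, ((N : ℤ) ≤ i ∨ i ≤ -(N : ℤ)) → u i = 0)
    (l : ℤ) (s : ℕ) (v : ℝ) (hsol : SolitonC1 u l s v) (k : ℝ) (hk : k = v) :
    ((∃ Φ : ℤ → ℝ, FundG u k l Φ) ∧
     (∀ Φ Ψ : ℤ → ℝ, FundG u k l Φ → FundG u k l Ψ → ∃ c : ℝ, ∀ i : ℤ, Φ i = Ψ i + c) ∧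
     (∀ Φ : ℤ → ℝ, FundG u k l Φ → SolvesG u k Φ ∧ APhi k Φ)) ∧
    ((∃ Φ : ℤ → ℝ, FundD u k l s Φ) ∧
     (∀ Φ Ψ : ℤ → ℝ, FundD u k l s Φ → FundD u k l s Ψ → ∃ c : ℝ, ∀ i : ℤ, Φ i = Ψ i + c) ∧
     (∀ Φ : ℤ → ℝ, FundD u k l s Φ → SolvesD u k Φ ∧ APhi k Φ)) ∧
    (∀ Φ : ℤ → ℝ, FundG u k l Φ →
      (∀ i : ℤ, i ≤ l → Φ i - Φ (i + 1) = u i - k) ∧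
      (∀ i : ℤ, l ≤ i → Φ (i + 1) - Φ i = u (i + 1))) ∧
    (∀ Φ : ℤ → ℝ, FundD u k l s Φ →
      (∀ i : ℤ, i ≤ l + (s : ℤ) - 1 → Φ i - Φ (i + 1) = u (i - 1) - k) ∧
      (∀ i : ℤ, l + (s : ℤ) ≤ i → Φ (i + 1) - Φ i = u i)) :=
  stmt_10_general u N hAU l s v hsol k hk
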